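/- For a quasi-norm |·| on an Abelian group with triangle constant κ ≥ 1 (i.e., |a+b| ≤ κ(|a|+|b|)), if ρ > 0 satisfies (2κ)^ρ = 2, then there exists an equivalent 1-norm |·|' on the group satisfying |a|' ≤ |a|^ρ ≤ 2|a|' for all a. -/

import Mathlib

/-!
Put `H = N ^ ρ`. Since `(2κ) ^ ρ = 2`, `H` satisfies `H (a + b) ≤ 2 * max (H a) (H b)`, and for
such `H` one has `H (x₁ + ⋯ + xₙ) ≤ 2 * ∑ H xᵢ`: choose depths `dᵢ` with
`2⁻¹ ^ dᵢ * S ≤ H xᵢ ≤ 2⁻¹ ^ dᵢ * 2S`, where `S = ∑ H xᵢ`. The weights `2⁻¹ ^ dᵢ` then satisfy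
Kraft's inequality `∑ 2⁻¹ ^ dᵢ ≤ 1`, and merging the two deepest summands into a single one of
depth one less preserves both Kraft's inequality and the bounds `H xᵢ ≤ 2⁻¹ ^ dᵢ * 2S`, until a
single summand is left. Hence `N' a = inf {∑ H xᵢ | a = ∑ xᵢ}` is a subadditive minorant of `H`
with `H ≤ 2 N'`.
-/

lemma sum_half_pow_add_le_one {ι : Type*} {s : Multiset ι} {d : ι → ℕ} {e : ℕ}
    (hs : ∀ i ∈ s, d i ≤ e) (h : (s.map fun i => (2⁻¹ : ℝ) ^ d i).sum < 1) :
    (s.map fun i => (2⁻¹ : ℝ) ^ d i).sum + 2⁻¹ ^ e ≤ 1 := by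
  set k : ℕ := (s.map fun i => 2 ^ (e - d i)).sum
  have hk : (s.map fun i => (2⁻¹ : ℝ) ^ d i).sum = k * 2⁻¹ ^ e := by
    rw [Nat.cast_multiset_sum, Multiset.map_map, ← Multiset.sum_map_mul_right]
    refine congrArg _ (Multiset.map_congr rfl fun i hi => ?_)
    rw [Function.comp_apply, Nat.cast_pow, Nat.cast_ofNat, ← Nat.sub_add_cancel (hs i hi),
      Nat.add_sub_cancel, pow_add, ← mul_assoc, ← mul_pow]
    norm_num
  have hunit : (1 : ℝ) = (2 ^ e : ℕ) * 2⁻¹ ^ e := by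
    rw [Nat.cast_pow, Nat.cast_ofNat, ← mul_pow]
    norm_num
  have hk_lt : k + 1 ≤ 2 ^ e := by
    rw [hk, hunit] at h
    exact_mod_cast lt_of_mul_lt_mul_right h (by positivity)
  rw [hk, hunit, ← add_one_mul]
  gcongr
  exact_mod_cast hk_lt

lemma exists_half_pow_mul_le_le {h S : ℝ} (hh : 0 < h) (hhS : h ≤ S) :
    ∃ d : ℕ, (2⁻¹ : ℝ) ^ d * S ≤ h ∧ h ≤ 2⁻¹ ^ d * (2 * S) := by
  have hS : 0 < S := hh.trans_le hhS
  obtain ⟨n, hlt, hle⟩ := exists_nat_pow_near_of_lt_one (div_pos hh hS)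
    ((div_le_one hS).2 hhS) (by norm_num : (0 : ℝ) < 2⁻¹) (by norm_num)
  refine ⟨n + 1, (le_div_iff₀ hS).1 hlt.le, ?_⟩
  calc h ≤ 2⁻¹ ^ n * S := (div_le_iff₀ hS).1 hle
    _ = 2⁻¹ ^ (n + 1) * (2 * S) := by rw [pow_succ]; ring

section QuasiUltrametric

variable {A : Type*} [AddCommGroup A] {H : A → ℝ}

theorem apply_sum_fst_le_of_dyadic (h0 : H 0 = 0)
    (h2 : ∀ a b, H (a + b) ≤ 2 * max (H a) (H b)) {T : ℝ} (hT : 0 ≤ T) (s : Multiset (A × ℕ))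
    (hH : ∀ p ∈ s, H p.1 ≤ 2⁻¹ ^ p.2 * T) (hw : (s.map fun p => (2⁻¹ : ℝ) ^ p.2).sum ≤ 1) :
    H (s.map Prod.fst).sum ≤ T := by
  induction hn : Multiset.card s generalizing s with
  | zero => simpa [Multiset.card_eq_zero.mp hn, h0] using hT
  | succ n ih =>
    obtain ⟨a, has, ha_max⟩ :=
      Multiset.exists_max_image Prod.snd (s := s) (Multiset.card_pos.mp (by omega))
    obtain ⟨t, rfl⟩ := Multiset.exists_cons_of_mem has
    rcases eq_or_ne t 0 with rfl | ht
    · simpa [h0] using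
        (hH a has).trans (mul_le_of_le_one_left hT (pow_le_one₀ (by norm_num) (by norm_num)))
    obtain ⟨b, hbt, hb_max⟩ := Multiset.exists_max_image Prod.snd ht
    obtain ⟨r, rfl⟩ := Multiset.exists_cons_of_mem hbt
    -- The weights of `b ::ₘ r` are multiples of `2⁻¹ ^ b.2` and sum to less than `1`.
    have hbr := sum_half_pow_add_le_one hb_max <| by
      rw [Multiset.map_cons, Multiset.sum_cons] at hw
      linarith [show (0 : ℝ) < 2⁻¹ ^ a.2 by positivity]
    simp only [Multiset.map_cons, Multiset.sum_cons, Multiset.forall_mem_cons, Multiset.card_cons]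
      at hw hH hn hbr ⊢
    have hr : 0 ≤ (r.map fun p => (2⁻¹ : ℝ) ^ p.2).sum :=
      Multiset.sum_nonneg (Multiset.forall_mem_map_iff.mpr fun _ _ => by positivity)
    obtain ⟨e, he⟩ : ∃ e, b.2 = e + 1 :=
      Nat.exists_eq_add_one.mpr <| Nat.pos_of_ne_zero fun hb0 => by
        rw [hb0, pow_zero] at hbr
        linarith
    have ha : H a.1 ≤ 2⁻¹ ^ b.2 * T := hH.1.trans <| mul_le_mul_of_nonneg_right
      (pow_le_pow_of_le_one (by norm_num) (by norm_num) (ha_max b (Multiset.mem_cons_of_mem hbt)))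
      hT
    have hab : H (a.1 + b.1) ≤ 2⁻¹ ^ e * T :=
      calc H (a.1 + b.1) ≤ 2 * max (H a.1) (H b.1) := h2 _ _
        _ ≤ 2 * (2⁻¹ ^ b.2 * T) := mul_le_mul_of_nonneg_left (max_le ha hH.2.1) zero_le_two
        _ = 2⁻¹ ^ e * T := by rw [he, pow_succ]; ring
    have hmerged := ih ((a.1 + b.1, e) ::ₘ r) (Multiset.forall_mem_cons.mpr ⟨hab, hH.2.2⟩) ?_
      (by simp only [Multiset.card_cons]; omega)
    · simpa only [Multiset.map_cons, Multiset.sum_cons, add_assoc] using hmerged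
    · rw [Multiset.map_cons, Multiset.sum_cons]
      rw [he, pow_succ] at hbr
      linarith

theorem apply_sum_le_two_mul_sum_map_of_pos (h0 : H 0 = 0)
    (h2 : ∀ a b, H (a + b) ≤ 2 * max (H a) (H b)) (s : Multiset A) (hs : ∀ x ∈ s, 0 < H x) :
    H s.sum ≤ 2 * (s.map H).sum := by
  rcases eq_or_ne s 0 with rfl | hne
  · simp [h0]
  set S := (s.map H).sum
  have hHS : ∀ x ∈ s, H x ≤ S := fun x hx =>
    Multiset.single_le_sum (Multiset.forall_mem_map_iff.mpr fun y hy => (hs y hy).le) _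
      (Multiset.mem_map_of_mem H hx)
  have hS : 0 < S := by
    obtain ⟨x, hx⟩ := Multiset.exists_mem_of_ne_zero hne
    exact (hs x hx).trans_le (hHS x hx)
  have hdepth : ∀ x, ∃ d : ℕ, x ∈ s → (2⁻¹ : ℝ) ^ d * S ≤ H x ∧ H x ≤ 2⁻¹ ^ d * (2 * S) := by
    intro x
    by_cases hx : x ∈ s
    · obtain ⟨d, hd⟩ := exists_half_pow_mul_le_le (hs x hx) (hHS x hx)
      exact ⟨d, fun _ => hd⟩
    · exact ⟨0, (absurd · hx)⟩
  choose d hd using hdepth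
  have hkraft : (s.map fun x => (2⁻¹ : ℝ) ^ d x).sum ≤ 1 := by
    refine le_of_mul_le_mul_right ?_ hS
    rw [one_mul, ← Multiset.sum_map_mul_right]
    exact Multiset.sum_map_le_sum_map _ _ fun x hx => (hd x hx).1
  have := apply_sum_fst_le_of_dyadic h0 h2 (T := 2 * S) (by positivity) (s.map fun x => (x, d x))
    (by simpa only [Multiset.forall_mem_map_iff] using fun x hx => (hd x hx).2)
    (by simpa only [Multiset.map_map, Function.comp_def] using hkraft)
  simpa only [Multiset.map_map, Function.comp_def, Multiset.map_id'] using this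

theorem apply_sum_le_two_mul_sum_map (h0 : H 0 = 0) (hpos : ∀ x, x ≠ 0 → 0 < H x)
    (h2 : ∀ a b, H (a + b) ≤ 2 * max (H a) (H b)) (s : Multiset A) :
    H s.sum ≤ 2 * (s.map H).sum := by
  classical
  have hzero : ((s.filter (· = 0)).map H).sum = 0 ∧ (s.filter (· = 0)).sum = 0 := by
    constructor <;> refine Multiset.sum_eq_zero fun x hx => ?_
    · obtain ⟨y, hy, rfl⟩ := Multiset.mem_map.mp hx
      rw [(Multiset.mem_filter.mp hy).2, h0]
    · exact (Multiset.mem_filter.mp hx).2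
  rw [← Multiset.filter_add_not (· = 0) s, Multiset.map_add, Multiset.sum_add, Multiset.sum_add,
    hzero.1, hzero.2, zero_add, zero_add]
  exact apply_sum_le_two_mul_sum_map_of_pos h0 h2 _ fun x hx => hpos x (Multiset.mem_filter.mp hx).2

end QuasiUltrametric

section DecompInf

variable {A : Type*} [AddCommGroup A]

noncomputable def decompInf (H : A → ℝ) (a : A) : ℝ :=
  ⨅ s : {s : Multiset A // s.sum = a}, (s.1.map H).sum

instance (a : A) : Nonempty {s : Multiset A // s.sum = a} := ⟨⟨{a}, Multiset.sum_singleton a⟩⟩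

variable {H : A → ℝ}

lemma bddBelow_range_sum_map (hnn : ∀ x, 0 ≤ H x) (a : A) :
    BddBelow (Set.range fun s : {s : Multiset A // s.sum = a} => (s.1.map H).sum) :=
  ⟨0, by
    rintro _ ⟨s, rfl⟩
    exact Multiset.sum_nonneg (Multiset.forall_mem_map_iff.mpr fun x _ => hnn x)⟩

lemma decompInf_le_sum_map (hnn : ∀ x, 0 ≤ H x) (s : Multiset A) :
    decompInf H s.sum ≤ (s.map H).sum :=
  ciInf_le (bddBelow_range_sum_map hnn _) ⟨s, rfl⟩

lemma decompInf_le (hnn : ∀ x, 0 ≤ H x) (a : A) : decompInf H a ≤ H a := by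
  simpa using decompInf_le_sum_map hnn {a}

lemma decompInf_nonneg (hnn : ∀ x, 0 ≤ H x) (a : A) : 0 ≤ decompInf H a :=
  le_ciInf fun _ => Multiset.sum_nonneg (Multiset.forall_mem_map_iff.mpr fun x _ => hnn x)

lemma decompInf_add_le (hnn : ∀ x, 0 ≤ H x) (a b : A) :
    decompInf H (a + b) ≤ decompInf H a + decompInf H b :=
  le_ciInf_add_ciInf fun s t => by
    simpa [s.2, t.2] using decompInf_le_sum_map hnn (s.1 + t.1)

lemma decompInf_neg_le (hnn : ∀ x, 0 ≤ H x) (hneg : ∀ x, H (-x) = H x) (a : A) :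
    decompInf H (-a) ≤ decompInf H a :=
  le_ciInf fun ⟨s, hs⟩ => by
    simpa only [Multiset.sum_map_neg', hs, Multiset.map_map, Function.comp_def, hneg] using
      decompInf_le_sum_map hnn (s.map Neg.neg)

lemma decompInf_neg (hnn : ∀ x, 0 ≤ H x) (hneg : ∀ x, H (-x) = H x) (a : A) :
    decompInf H (-a) = decompInf H a :=
  le_antisymm (decompInf_neg_le hnn hneg a) (by simpa using decompInf_neg_le hnn hneg (-a))

lemma le_mul_decompInf {C : ℝ} (hC : 0 ≤ C) (h : ∀ s : Multiset A, H s.sum ≤ C * (s.map H).sum)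
    (a : A) : H a ≤ C * decompInf H a := by
  rw [decompInf, Real.mul_iInf_of_nonneg hC]
  exact le_ciInf fun ⟨s, hs⟩ => hs ▸ h s

end DecompInf

lemma rpow_apply_add_le_two_mul_max {A : Type*} [AddCommGroup A] {N : A → ℝ} {κ ρ : ℝ}
    (hκ : 0 ≤ κ) (hnn : ∀ a, 0 ≤ N a) (htri : ∀ a b, N (a + b) ≤ κ * (N a + N b)) (hρ : 0 ≤ ρ)
    (hρκ : (2 * κ) ^ ρ = 2) (a b : A) : N (a + b) ^ ρ ≤ 2 * max (N a ^ ρ) (N b ^ ρ) := by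
  have hmax : 0 ≤ max (N a) (N b) := (hnn a).trans (le_max_left _ _)
  have hsum : N a + N b ≤ 2 * max (N a) (N b) := by
    linarith [le_max_left (N a) (N b), le_max_right (N a) (N b)]
  calc N (a + b) ^ ρ ≤ (2 * κ * max (N a) (N b)) ^ ρ := by
        gcongr
        · exact hnn _
        · calc N (a + b) ≤ κ * (N a + N b) := htri a b
            _ ≤ κ * (2 * max (N a) (N b)) := by gcongr
            _ = 2 * κ * max (N a) (N b) := by ring
    _ = 2 * max (N a ^ ρ) (N b ^ ρ) := by
        rw [Real.mul_rpow (by positivity) hmax, hρκ, Real.rpow_max (hnn a) (hnn b) hρ]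

/-- a `κ`-quasinorm admits an equivalent `1`-norm with
`|a|' ≤ |a|^ρ ≤ 2|a|'` whenever `(2κ)^ρ = 2`, `ρ > 0`. -/
theorem quasinorm_equiv_one_norm {A : Type*} [AddCommGroup A]
    (N : A → ℝ) (κ ρ : ℝ) (hκ : 1 ≤ κ)
    (hnn : ∀ a, 0 ≤ N a) (h0 : N 0 = 0) (hpos : ∀ a : A, a ≠ 0 → 0 < N a)
    (hneg : ∀ a : A, N (-a) = N a)
    (htri : ∀ a b : A, N (a + b) ≤ κ * (N a + N b))
    (hρ : 0 < ρ) (hρκ : (2 * κ) ^ ρ = 2) :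
    ∃ N' : A → ℝ,
      (∀ a, 0 ≤ N' a) ∧ N' 0 = 0 ∧ (∀ a : A, a ≠ 0 → 0 < N' a) ∧
      (∀ a : A, N' (-a) = N' a) ∧
      (∀ a b : A, N' (a + b) ≤ N' a + N' b) ∧
      (∀ a : A, N' a ≤ (N a) ^ ρ ∧ (N a) ^ ρ ≤ 2 * N' a) := by
  set H : A → ℝ := fun a => N a ^ ρ
  have hHnn : ∀ a, 0 ≤ H a := fun a => Real.rpow_nonneg (hnn a) ρ
  have hH0 : H 0 = 0 := by simp [H, h0, hρ.ne']
  have hHpos : ∀ a, a ≠ 0 → 0 < H a := fun a ha => Real.rpow_pos_of_pos (hpos a ha) ρ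
  have hH2 : ∀ a b, H (a + b) ≤ 2 * max (H a) (H b) :=
    rpow_apply_add_le_two_mul_max (by linarith) hnn htri hρ.le hρκ
  have hH_le : ∀ a, H a ≤ 2 * decompInf H a :=
    le_mul_decompInf zero_le_two (apply_sum_le_two_mul_sum_map hH0 hHpos hH2)
  refine ⟨decompInf H, decompInf_nonneg hHnn, ?_, fun a ha => ?_,
    decompInf_neg hHnn (by simp [H, hneg]), decompInf_add_le hHnn,
    fun a => ⟨decompInf_le hHnn a, hH_le a⟩⟩
  · exact le_antisymm (hH0 ▸ decompInf_le hHnn 0) (decompInf_nonneg hHnn 0)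
  · linarith [hHpos a ha, hH_le a]
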